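/- arXiv:math/9406221 — 3 statements merged into one kernel-verified Lean document; each statement's English description precedes it below -/
import Mathlib

section
/- Let b₁, b₂, … be real numbers and a₁, a₂, … be positive real numbers, and define monic polynomials P₋₁ = 0, P₀ = 1, P_{n+1}(z) = (z − b_{n+1})·P_n(z) − a_n·P_{n−1}(z) for n ≥ 0 (with a₀·P₋₁ understood as 0). Suppose there exists x₀ ∈ ℝ such that: (i) for every m ≥ 1 and all real roots z₀, z₁ of P_{2m} one has P_{2m−1}(z₀)·P_{2m}'(z₁) = P_{2m−1}(z₁)·P_{2m}'(z₀) (equal masses of the reversed measure at all support points); and (ii) for every m ≥ 0 one has P_{2m+1}(x₀) = 0, for all real roots z₀, z₁ of P_{2m+1} different from x₀ one has P_{2m}(z₀)·P_{2m+1}'(z₁) = P_{2m}(z₁)·P_{2m+1}'(z₀), and P_{2m}(x₀)·P_{2m+1}'(x₀) > 0. Then there exist γ > −1 and c > 0 such that b_n = x₀ for all n ≥ 1, a_n = n/(2c²) for all even n ≥ 1, and a_n = (n+γ)/(2c²) for all odd n ≥ 1; that is, the polynomials are (up to the linear transformation x ↦ c(x − x₀)) the monic generalized Hermite polynomials orthogonal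 with respect to |x|^γ·exp(−x²)dx. -/
/-!
The Wronskian `Wₙ = P'ₙ₊₁ Pₙ - Pₙ₊₁ P'ₙ` satisfies `Wₙ = Pₙ² + aₙ Wₙ₋₁` and `W₀ = 1`, so it is
positive: every zero of `Pₙ₊₁` is simple and is not a zero of `Pₙ`. The usual sign-change argument
shows that `Pₙ₊₁` has `n + 1` real zeros, interlacing those of `Pₙ`. If the masses
`Pₙ(z) / P'ₙ₊₁(z)` agree at all of them, then `P'ₙ₊₁` and `Pₙ`, both of degree `n`, are
proportional, so `P'ₙ₊₁ = (n + 1) Pₙ`.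

The hypothesis on the levels `2m` thus gives `P'₂ₖ₊₂ = (2k + 2) P₂ₖ₊₁`. Evaluating the recurrence
and its derivative at `x₀`, a simple zero of every `P₂ₖ₊₁`, gives `bₙ = x₀`. Multiplying the
differentiated recurrence by `X - x₀` and rewriting with the derivative identities leaves a
combination of `P₂ⱼ₊₃` and `P₂ⱼ₊₁` that must vanish; its coefficients give
`(j + 2) a₂ⱼ₊₅ = (j + 2) a₂ⱼ₊₃ + a₂ⱼ₊₄` and `(j + 1) a₂ⱼ₊₄ = (j + 2) a₂ⱼ₊₂`, which with
`a₃ = a₁ + a₂` solve to `a₂ₖ = k a₂` and `a₂ₖ₊₁ = a₁ + k a₂`.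
-/

open Polynomial

/-- The monic orthogonal polynomials `P n` associated with the three-term recurrence
`P_{n+1}(z) = (z - b_{n+1}) P_n(z) - a_n P_{n-1}(z)`, `P 0 = 1`
(with the term `a₀ · P₋₁` understood as `0`, so `P 1 = X - b 1`). -/
noncomputable def tridiagRec (b a : ℕ → ℝ) : ℕ → Polynomial ℝ
  | 0 => 1
  | 1 => Polynomial.X - Polynomial.C (b 1)
  | n + 2 =>
      (Polynomial.X - Polynomial.C (b (n + 2))) * tridiagRec b a (n + 1)
        - Polynomial.C (a (n + 1)) * tridiagRec b a n

open Finset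

theorem neg_one_pow_mul_prod_sub_pos {n k : ℕ} (hk : k ≤ n) {s : ℕ → ℝ} {x : ℝ}
    (hlt : ∀ j < k, s j < x) (hgt : ∀ j, k ≤ j → j < n → x < s j) :
    0 < (-1) ^ (n - k) * ∏ j ∈ range n, (x - s j) := by
  have hflip : (-1) ^ (n - k) * ∏ j ∈ Ico k n, (x - s j) = ∏ j ∈ Ico k n, (s j - x) := by
    rw [← Nat.card_Ico k n, ← prod_const, ← prod_mul_distrib]
    exact prod_congr rfl fun _ _ => by ring
  rw [← prod_range_mul_prod_Ico _ hk, mul_left_comm, hflip]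
  refine mul_pos (prod_pos fun j hj => ?_) (prod_pos fun j hj => ?_)
  · exact sub_pos.2 (hlt j (mem_range.1 hj))
  · obtain ⟨hkj, hjn⟩ := mem_Ico.1 hj
    exact sub_pos.2 (hgt j hkj hjn)

theorem strictMonoOn_Iic_of_interlacing {s t : ℕ → ℝ} {n : ℕ}
    (h : ∀ j < n, t j < s j ∧ s j < t (j + 1)) : StrictMonoOn t (Set.Iic n) :=
  strictMonoOn_Iic_of_lt_succ fun j hj => by simpa using (h j hj).1.trans (h j hj).2

theorem eval_prod_X_sub_C_eq_zero {s : Finset ℕ} {u : ℕ → ℝ} {i : ℕ} (hi : i ∈ s) :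
    eval (u i) (∏ j ∈ s, (X - C (u j))) = 0 := by
  rw [eval_prod]; exact prod_eq_zero hi (by simp)

theorem exists_eval_eq_zero_of_neg_one_pow_mul_pos {p : ℝ[X]} {u v : ℝ} (huv : u < v) (e : ℕ)
    (hu : 0 < (-1) ^ (e + 1) * p.eval u) (hv : 0 < (-1) ^ e * p.eval v) :
    ∃ x, u < x ∧ x < v ∧ p.eval x = 0 := by
  rw [pow_succ, mul_assoc, neg_one_mul, mul_neg, neg_pos] at hu
  obtain ⟨x, ⟨hux, hxv⟩, hx⟩ := intermediate_value_Ioo huv.le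
    (continuous_const.mul p.continuous).continuousOn (Set.mem_Ioo.2 ⟨hu, hv⟩)
  exact ⟨x, hux, hxv, (mul_eq_zero.1 hx).resolve_left (pow_ne_zero _ (by norm_num))⟩

theorem Polynomial.Monic.exists_gt_eval_pos {p : ℝ[X]} (hp : p.Monic) (hdeg : 0 < p.degree)
    (R : ℝ) : ∃ M, R < M ∧ 0 < p.eval M := by
  have hlim := p.tendsto_atTop_of_leadingCoeff_nonneg hdeg (hp.leadingCoeff ▸ zero_le_one)
  exact ((Filter.eventually_gt_atTop R).and (hlim.eventually_gt_atTop 0)).exists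

theorem Polynomial.Monic.exists_lt_neg_one_pow_mul_eval_pos {p : ℝ[X]} (hp : p.Monic)
    (hdeg : 0 < p.degree) (R : ℝ) : ∃ L, L < R ∧ 0 < (-1) ^ p.natDegree * p.eval L := by
  obtain ⟨M, hRM, hM⟩ := hp.neg_one_pow_natDegree_mul_comp_neg_X.exists_gt_eval_pos
    (by simpa [degree_mul] using hdeg) (-R)
  refine ⟨-M, by linarith, ?_⟩
  simpa [eval_comp] using hM

theorem Polynomial.Monic.eq_prod_X_sub_C_of_injOn {p : ℝ[X]} (hp : p.Monic) {N : ℕ}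
    (hdeg : p.natDegree = N) {u : ℕ → ℝ} (hu : Set.InjOn u (range N))
    (hroot : ∀ j < N, p.eval (u j) = 0) : p = ∏ j ∈ range N, (X - C (u j)) := by
  have hprod : (∏ j ∈ range N, (X - C (u j))).Monic :=
    monic_prod_of_monic _ _ fun j _ => monic_X_sub_C (u j)
  have hdeg' : p.degree = (∏ j ∈ range N, (X - C (u j))).degree := by
    rw [degree_eq_natDegree hp.ne_zero, degree_eq_natDegree hprod.ne_zero, hdeg,
      natDegree_finsetProd_X_sub_C_eq_card, card_range]
  refine eq_of_degree_le_of_eval_index_eq (range N) hu ?_ hdeg'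
    (by rw [hp.leadingCoeff, hprod.leadingCoeff]) fun j hj => ?_
  · rw [card_range, ← hdeg]; exact degree_le_natDegree
  · rw [hroot j (mem_range.1 hj), eval_prod_X_sub_C_eq_zero hj]

theorem Polynomial.Monic.exists_eval_eq_zero_between {p : ℝ[X]} (hp : p.Monic) {n : ℕ}
    (hdeg : p.natDegree = n + 1) {t : ℕ → ℝ} (ht : ∀ j, j + 1 < n → t j < t (j + 1))
    (hsign : ∀ i < n, 0 < (-1) ^ (n - i) * p.eval (t i)) (j : ℕ) (hj : j ≤ n) :
    ∃ x, (0 < j → t (j - 1) < x) ∧ (j < n → x < t j) ∧ p.eval x = 0 := by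
  have hpos : 0 < p.degree := by
    rw [degree_eq_natDegree hp.ne_zero, hdeg]; exact_mod_cast n.succ_pos
  obtain ⟨M, hM, hpM⟩ := hp.exists_gt_eval_pos hpos (t (n - 1))
  obtain ⟨L, hL, hpL⟩ := hp.exists_lt_neg_one_pow_mul_eval_pos hpos (min (t 0) M)
  rw [hdeg] at hpL
  -- `L` and `M` stand in for `∓∞` at the two ends
  let lo := if j = 0 then L else t (j - 1)
  let hi := if j = n then M else t j
  have hlohi : lo < hi := by
    rcases Nat.eq_zero_or_pos j with rfl | hj0
    · simp only [lo, hi, if_true]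
      split_ifs
      · exact hL.trans_le (min_le_right _ _)
      · exact hL.trans_le (min_le_left _ _)
    · simp only [lo, hi, hj0.ne', if_false]
      split_ifs with hjn
      · subst hjn; exact hM
      · simpa [Nat.sub_add_cancel hj0] using ht (j - 1) (by omega)
  have hlo : 0 < (-1) ^ (n - j + 1) * p.eval lo := by
    rcases Nat.eq_zero_or_pos j with rfl | hj0
    · simpa [lo] using hpL
    · simpa [lo, hj0.ne', show n - (j - 1) = n - j + 1 by omega] using hsign (j - 1) (by omega)
  have hhi : 0 < (-1) ^ (n - j) * p.eval hi := by
    rcases hj.eq_or_lt with rfl | hjn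
    · simpa [hi] using hpM
    · simpa [hi, hjn.ne] using hsign j hjn
  obtain ⟨x, hlox, hxhi, hx⟩ := exists_eval_eq_zero_of_neg_one_pow_mul_pos hlohi (n - j) hlo hhi
  exact ⟨x, fun hj0 => by simpa [lo, hj0.ne'] using hlox,
    fun hjn => by simpa [hi, hjn.ne] using hxhi, hx⟩

theorem Polynomial.Monic.exists_roots_interlacing {p : ℝ[X]} (hp : p.Monic) {n : ℕ}
    (hdeg : p.natDegree = n + 1) {t : ℕ → ℝ} (ht : ∀ j, j + 1 < n → t j < t (j + 1))
    (hsign : ∀ i < n, 0 < (-1) ^ (n - i) * p.eval (t i)) :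
    ∃ u : ℕ → ℝ, p = ∏ j ∈ range (n + 1), (X - C (u j)) ∧
      ∀ j < n, u j < t j ∧ t j < u (j + 1) := by
  choose! u hlo hhi hu using hp.exists_eval_eq_zero_between hdeg ht hsign
  have hinter : ∀ j < n, u j < t j ∧ t j < u (j + 1) := fun j hj =>
    ⟨hhi j hj.le hj, by simpa using hlo (j + 1) hj (Nat.succ_pos j)⟩
  refine ⟨u, hp.eq_prod_X_sub_C_of_injOn hdeg
    ((strictMonoOn_Iic_of_interlacing hinter).injOn.mono ?_)
    (fun j hj => hu j (by omega)), hinter⟩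
  intro j hj
  simp only [coe_range, Set.mem_Iio, Set.mem_Iic] at hj ⊢
  omega

theorem Polynomial.eq_C_mul_of_eval_mul_comm {K : Type*} [Field K] {q r : K[X]} (S : Finset K)
    (hq : q.natDegree < S.card) (hr : r.natDegree < S.card)
    (hqr : ∀ z ∈ S, ∀ w ∈ S, q.eval z * r.eval w = q.eval w * r.eval z)
    {z₀ : K} (hz₀ : z₀ ∈ S) (hq₀ : q.eval z₀ ≠ 0) :
    r = C (r.eval z₀ / q.eval z₀) * q := by
  have hdeg {f : K[X]} (hf : f.natDegree < S.card) : f.degree < S.card :=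
    degree_le_natDegree.trans_lt (by exact_mod_cast hf)
  refine eq_of_degrees_lt_of_eval_finset_eq S (hdeg hr)
    (hdeg ((natDegree_C_mul_le _ _).trans_lt hq)) fun z hz => ?_
  rw [eval_mul, eval_C, div_mul_eq_mul_div, eq_div_iff hq₀]
  linear_combination hqr z₀ hz₀ z hz

theorem Polynomial.Monic.eq_zero_of_C_mul_add_C_mul_eq_zero {K : Type*} [Field K] {p q : K[X]}
    (hp : p.Monic) (hq : q.Monic) (hdeg : q.natDegree < p.natDegree) {α β : K}
    (h : C α * p + C β * q = 0) : α = 0 ∧ β = 0 := by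
  have hα := congrArg (coeff · p.natDegree) h
  simp only [coeff_add, coeff_C_mul, hp.coeff_natDegree, coeff_eq_zero_of_natDegree_lt hdeg,
    coeff_zero, mul_one, mul_zero, add_zero] at hα
  have hβ := congrArg (coeff · q.natDegree) h
  simp only [coeff_add, coeff_C_mul, hq.coeff_natDegree, hα, coeff_zero, zero_mul, zero_add,
    mul_one] at hβ
  exact ⟨hα, hβ⟩

namespace TridiagRec

variable {b a : ℕ → ℝ} {x₀ : ℝ}

theorem tridiagRec_add_two (n : ℕ) : tridiagRec b a (n + 2) =
    (X - C (b (n + 2))) * tridiagRec b a (n + 1) - C (a (n + 1)) * tridiagRec b a n := rfl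

theorem monic_tridiagRec_and_natDegree (n : ℕ) :
    (tridiagRec b a n).Monic ∧ (tridiagRec b a n).natDegree = n := by
  induction n using Nat.strong_induction_on with
  | _ n ih =>
    match n with
    | 0 => exact ⟨monic_one, natDegree_one⟩
    | 1 => exact ⟨monic_X_sub_C _, natDegree_X_sub_C _⟩
    | n + 2 =>
      obtain ⟨hm₁, hd₁⟩ := ih (n + 1) (by omega)
      have hd₀ := (ih n (by omega)).2
      have hlead : ((X - C (b (n + 2))) * tridiagRec b a (n + 1)).Monic :=
        (monic_X_sub_C _).mul hm₁
      have hlead_deg : ((X - C (b (n + 2))) * tridiagRec b a (n + 1)).natDegree = n + 2 := by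
        rw [(monic_X_sub_C _).natDegree_mul hm₁, natDegree_X_sub_C, hd₁]; ring
      have hlow : (C (a (n + 1)) * tridiagRec b a n).natDegree
          < ((X - C (b (n + 2))) * tridiagRec b a (n + 1)).natDegree := by
        rw [hlead_deg]; exact (natDegree_C_mul_le _ _).trans_lt (by omega)
      rw [tridiagRec_add_two, natDegree_sub_eq_left_of_natDegree_lt hlow, hlead_deg]
      exact ⟨hlead.sub_of_left (degree_lt_degree hlow), rfl⟩

theorem monic_tridiagRec (n : ℕ) : (tridiagRec b a n).Monic :=
  (monic_tridiagRec_and_natDegree n).1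

theorem natDegree_tridiagRec (n : ℕ) : (tridiagRec b a n).natDegree = n :=
  (monic_tridiagRec_and_natDegree n).2

theorem coeff_tridiagRec_self (n : ℕ) : (tridiagRec b a n).coeff n = 1 := by
  simpa [natDegree_tridiagRec] using (monic_tridiagRec (b := b) (a := a) n).coeff_natDegree

theorem derivative_tridiagRec_add_two (n : ℕ) :
    derivative (tridiagRec b a (n + 2)) = tridiagRec b a (n + 1)
      + (X - C (b (n + 2))) * derivative (tridiagRec b a (n + 1))
      - C (a (n + 1)) * derivative (tridiagRec b a n) := by
  simp only [tridiagRec_add_two, derivative_sub, derivative_mul, derivative_X, derivative_C]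
  ring

theorem wronskian_tridiagRec_add_two (n : ℕ) :
    derivative (tridiagRec b a (n + 2)) * tridiagRec b a (n + 1)
        - tridiagRec b a (n + 2) * derivative (tridiagRec b a (n + 1)) =
      tridiagRec b a (n + 1) ^ 2 + C (a (n + 1)) *
        (derivative (tridiagRec b a (n + 1)) * tridiagRec b a n
          - tridiagRec b a (n + 1) * derivative (tridiagRec b a n)) := by
  rw [derivative_tridiagRec_add_two, tridiagRec_add_two]
  ring

theorem eval_wronskian_tridiagRec_pos (ha : ∀ n ≥ 1, 0 < a n) (n : ℕ) (z : ℝ) :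
    0 < eval z (derivative (tridiagRec b a (n + 1)) * tridiagRec b a n
      - tridiagRec b a (n + 1) * derivative (tridiagRec b a n)) := by
  induction n with
  | zero => simp [tridiagRec]
  | succ n ih =>
    rw [wronskian_tridiagRec_add_two, eval_add, eval_mul, eval_C, eval_pow]
    exact add_pos_of_nonneg_of_pos (sq_nonneg _) (mul_pos (ha _ (by omega)) ih)

theorem eval_mul_eval_derivative_pos_of_eval_eq_zero (ha : ∀ n ≥ 1, 0 < a n) {n : ℕ} {z : ℝ}
    (hz : eval z (tridiagRec b a (n + 1)) = 0) :
    0 < eval z (tridiagRec b a n) * eval z (derivative (tridiagRec b a (n + 1))) := by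
  have hW := eval_wronskian_tridiagRec_pos (b := b) ha n z
  rwa [eval_sub, eval_mul, eval_mul, hz, zero_mul, sub_zero, mul_comm] at hW

theorem exists_roots_interlacing_tridiagRec (ha : ∀ n ≥ 1, 0 < a n) (n : ℕ) :
    ∃ s t : ℕ → ℝ, tridiagRec b a n = ∏ j ∈ range n, (X - C (s j)) ∧
      tridiagRec b a (n + 1) = ∏ j ∈ range (n + 1), (X - C (t j)) ∧
      ∀ j < n, t j < s j ∧ s j < t (j + 1) := by
  induction n with
  | zero => exact ⟨0, fun _ => b 1, by simp [tridiagRec], by simp [tridiagRec], by simp⟩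
  | succ n ih =>
    obtain ⟨s, t, hs, ht, hst⟩ := ih
    have htmono := strictMonoOn_Iic_of_interlacing hst
    have hroot : ∀ i ≤ n, eval (t i) (tridiagRec b a (n + 1)) = 0 := fun i hi => by
      rw [ht]; exact eval_prod_X_sub_C_eq_zero (mem_range.2 (by omega))
    have hsign_n : ∀ i ≤ n, 0 < (-1) ^ (n - i) * eval (t i) (tridiagRec b a n) := by
      intro i hi
      rw [hs, eval_prod]
      simp only [eval_sub, eval_X, eval_C]
      refine neg_one_pow_mul_prod_sub_pos hi (fun j hj => ?_) fun j hij hjn => ?_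
      · exact (hst j (by omega)).2.trans_le
          (htmono.monotoneOn (Set.mem_Iic.2 (by omega)) (Set.mem_Iic.2 hi) (by omega))
      · exact (htmono.monotoneOn (Set.mem_Iic.2 hi) (Set.mem_Iic.2 (by omega)) hij).trans_lt
          (hst j hjn).1
    have hsign : ∀ i < n + 1, 0 < (-1) ^ (n + 1 - i) * eval (t i) (tridiagRec b a (n + 2)) := by
      intro i hi
      have hn := hsign_n i (by omega)
      rw [tridiagRec_add_two, eval_sub, eval_mul, eval_mul, hroot i (by omega), eval_C,
        show n + 1 - i = n - i + 1 by omega, pow_succ]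
      nlinarith [ha (n + 1) (by omega)]
    obtain ⟨u, hu, htu⟩ := (monic_tridiagRec (n + 2)).exists_roots_interlacing
      (natDegree_tridiagRec _) (fun j hj => (hst j (by omega)).1.trans (hst j (by omega)).2) hsign
    exact ⟨t, u, ht, hu, htu⟩

theorem exists_finset_roots_tridiagRec (ha : ∀ n ≥ 1, 0 < a n) (n : ℕ) :
    ∃ S : Finset ℝ, S.card = n + 1 ∧ ∀ z ∈ S, eval z (tridiagRec b a (n + 1)) = 0 := by
  obtain ⟨s, t, -, ht, hst⟩ := exists_roots_interlacing_tridiagRec (b := b) ha n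
  refine ⟨(range (n + 1)).image t, ?_, ?_⟩
  · rw [card_image_of_injOn ((strictMonoOn_Iic_of_interlacing hst).injOn.mono fun j hj => ?_),
      card_range]
    simp only [coe_range, Set.mem_Iio, Set.mem_Iic] at hj ⊢
    omega
  · simp only [mem_image, mem_range, forall_exists_index, and_imp]
    rintro _ i hi rfl
    rw [ht]; exact eval_prod_X_sub_C_eq_zero (mem_range.2 hi)

theorem derivative_tridiagRec_succ_of_eval_mul_comm (ha : ∀ n ≥ 1, 0 < a n) {n : ℕ}
    (hmass : ∀ z₀ z₁ : ℝ,
      eval z₀ (tridiagRec b a (n + 1)) = 0 → eval z₁ (tridiagRec b a (n + 1)) = 0 →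
      eval z₀ (tridiagRec b a n) * eval z₁ (derivative (tridiagRec b a (n + 1))) =
        eval z₁ (tridiagRec b a n) * eval z₀ (derivative (tridiagRec b a (n + 1)))) :
    derivative (tridiagRec b a (n + 1)) = C ((n : ℝ) + 1) * tridiagRec b a n := by
  obtain ⟨S, hcard, hroot⟩ := exists_finset_roots_tridiagRec (b := b) ha n
  obtain ⟨z₀, hz₀⟩ : S.Nonempty := card_pos.1 (by omega)
  have hq₀ := (eval_mul_eval_derivative_pos_of_eval_eq_zero ha (hroot z₀ hz₀)).ne'
  have hr := eq_C_mul_of_eval_mul_comm S (by rw [natDegree_tridiagRec]; omega)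
    ((natDegree_derivative_le _).trans_lt (by rw [natDegree_tridiagRec]; omega))
    (fun z hz w hw => hmass z w (hroot z hz) (hroot w hw)) hz₀ (left_ne_zero_of_mul hq₀)
  have hlead := congrArg (coeff · n) hr
  simp only [coeff_derivative, coeff_C_mul] at hlead
  rw [coeff_tridiagRec_self, coeff_tridiagRec_self, one_mul, mul_one] at hlead
  rwa [← hlead] at hr

theorem b_odd_eq (ha : ∀ n ≥ 1, 0 < a n)
    (hroot : ∀ m : ℕ, eval x₀ (tridiagRec b a (2 * m + 1)) = 0) (m : ℕ) : b (2 * m + 1) = x₀ := by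
  have hne := left_ne_zero_of_mul (eval_mul_eval_derivative_pos_of_eval_eq_zero ha (hroot m)).ne'
  cases m with
  | zero => simpa [tridiagRec, sub_eq_zero, eq_comm] using hroot 0
  | succ m =>
    have h := hroot (m + 1)
    rw [show 2 * (m + 1) + 1 = 2 * m + 1 + 2 by ring, tridiagRec_add_two] at h
    simp only [eval_sub, eval_mul, eval_X, eval_C, hroot m, mul_zero, sub_zero] at h
    rw [show 2 * m + 1 + 1 = 2 * (m + 1) by ring] at h
    exact (sub_eq_zero.1 ((mul_eq_zero.1 h).resolve_right hne)).symm

theorem b_even_eq (ha : ∀ n ≥ 1, 0 < a n)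
    (hroot : ∀ m : ℕ, eval x₀ (tridiagRec b a (2 * m + 1)) = 0)
    (hderiv : ∀ k : ℕ, derivative (tridiagRec b a (2 * k + 2)) =
      C (2 * (k : ℝ) + 2) * tridiagRec b a (2 * k + 1)) (k : ℕ) : b (2 * k + 2) = x₀ := by
  -- evaluated at `x₀`, the differentiated recurrence for `P (2k+2)` reduces to
  -- `(x₀ - b (2k+2)) * P (2k+1)' x₀ = 0`, and `x₀` is a simple root of `P (2k+1)`
  have hne := right_ne_zero_of_mul (eval_mul_eval_derivative_pos_of_eval_eq_zero ha (hroot k)).ne'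
  have hlow : eval x₀ (derivative (tridiagRec b a (2 * k))) = 0 := by
    cases k with
    | zero => simp [tridiagRec]
    | succ k => rw [show 2 * (k + 1) = 2 * k + 2 by ring, hderiv k, eval_mul, hroot k, mul_zero]
  have h := congrArg (eval x₀) (derivative_tridiagRec_add_two (b := b) (a := a) (2 * k))
  rw [hderiv k] at h
  simp only [eval_add, eval_sub, eval_mul, eval_X, eval_C, hroot k, hlow, mul_zero, zero_add,
    sub_zero] at h
  exact (sub_eq_zero.1 ((mul_eq_zero.1 h.symm).resolve_right hne)).symm

theorem tridiagRec_add_two_of_eq (hb : ∀ n ≥ 1, b n = x₀) (n : ℕ) : tridiagRec b a (n + 2) =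
    (X - C x₀) * tridiagRec b a (n + 1) - C (a (n + 1)) * tridiagRec b a n := by
  rw [tridiagRec_add_two, hb _ (by omega)]

theorem derivative_tridiagRec_add_two_of_eq (hb : ∀ n ≥ 1, b n = x₀) (n : ℕ) :
    derivative (tridiagRec b a (n + 2)) = tridiagRec b a (n + 1)
      + (X - C x₀) * derivative (tridiagRec b a (n + 1))
      - C (a (n + 1)) * derivative (tridiagRec b a n) := by
  rw [derivative_tridiagRec_add_two, hb _ (by omega)]

theorem X_sub_C_mul_derivative_tridiagRec_odd (hb : ∀ n ≥ 1, b n = x₀)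
    (hderiv : ∀ k : ℕ, derivative (tridiagRec b a (2 * k + 2)) =
      C (2 * (k : ℝ) + 2) * tridiagRec b a (2 * k + 1)) (k : ℕ) :
    (X - C x₀) * derivative (tridiagRec b a (2 * k + 3)) =
      C (2 * (k : ℝ) + 3) * tridiagRec b a (2 * k + 3)
        + C ((2 * (k : ℝ) + 2) * a (2 * k + 3)) * tridiagRec b a (2 * k + 1) := by
  have hD := derivative_tridiagRec_add_two_of_eq (a := a) hb (2 * k + 2)
  have h₁ := hderiv (k + 1)
  push_cast at h₁
  simp only [map_add, map_mul, map_ofNat, map_natCast, map_one] at h₁ hderiv ⊢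
  linear_combination h₁ - hD + C (a (2 * k + 3)) * hderiv k

theorem a_relations (ha : ∀ n ≥ 1, 0 < a n) (hb : ∀ n ≥ 1, b n = x₀)
    (hderiv : ∀ k : ℕ, derivative (tridiagRec b a (2 * k + 2)) =
      C (2 * (k : ℝ) + 2) * tridiagRec b a (2 * k + 1)) (j : ℕ) :
    (2 * (j : ℝ) + 4) * a (2 * j + 5) = (2 * (j : ℝ) + 4) * a (2 * j + 3) + 2 * a (2 * j + 4) ∧
      ((j : ℝ) + 1) * a (2 * j + 4) = ((j : ℝ) + 2) * a (2 * j + 2) := by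
  have hX₅ := X_sub_C_mul_derivative_tridiagRec_odd hb hderiv (j + 1)
  have hX₃ := X_sub_C_mul_derivative_tridiagRec_odd hb hderiv j
  have hD := derivative_tridiagRec_add_two_of_eq (a := a) hb (2 * j + 3)
  have hO := hderiv (j + 1)
  have hR₅ := tridiagRec_add_two_of_eq (a := a) hb (2 * j + 3)
  have hR₄ := tridiagRec_add_two_of_eq (a := a) hb (2 * j + 2)
  have hR₃ := tridiagRec_add_two_of_eq (a := a) hb (2 * j + 1)
  push_cast at hX₅ hO
  simp only [map_add, map_mul, map_ofNat, map_natCast, map_one] at hX₅ hX₃ hO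
  have key : C ((2 * (j : ℝ) + 4) * a (2 * j + 5) - 2 * a (2 * j + 4)
        - (2 * (j : ℝ) + 4) * a (2 * j + 3)) * tridiagRec b a (2 * j + 3)
      + C (a (2 * j + 3) * ((2 * (j : ℝ) + 2) * a (2 * j + 4)
        - (2 * (j : ℝ) + 4) * a (2 * j + 2))) * tridiagRec b a (2 * j + 1) = 0 := by
    simp only [map_add, map_sub, map_mul, map_ofNat, map_natCast]
    linear_combination (X - C x₀) * hD - hX₅ + (X - C x₀) ^ 2 * hO - C (a (2 * j + 4)) * hX₃
      - (2 * (j : ℝ[X]) + 5) * hR₅ - (2 * (j : ℝ[X]) + 4) * C (a (2 * j + 3)) * hR₃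
      - (2 * (j : ℝ[X]) + 4) * (X - C x₀) * hR₄
  obtain ⟨h₁, h₂⟩ := (monic_tridiagRec _).eq_zero_of_C_mul_add_C_mul_eq_zero (monic_tridiagRec _)
    (by simp only [natDegree_tridiagRec]; omega) key
  have h₂' := (mul_eq_zero.1 h₂).resolve_left (ha (2 * j + 3) (by omega)).ne'
  constructor <;> linarith

theorem a_three_eq (hb : ∀ n ≥ 1, b n = x₀)
    (hderiv : ∀ k : ℕ, derivative (tridiagRec b a (2 * k + 2)) =
      C (2 * (k : ℝ) + 2) * tridiagRec b a (2 * k + 1)) : a 3 = a 1 + a 2 := by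
  have hP₁ : tridiagRec b a 1 = X - C x₀ := by rw [tridiagRec, hb 1 le_rfl]
  have e₁ : eval (x₀ + 1) (tridiagRec b a 1) = 1 := by simp [hP₁]
  have e₂ : eval (x₀ + 1) (tridiagRec b a 2) = 1 - a 1 := by
    rw [tridiagRec_add_two_of_eq hb 0]; simp [e₁, show tridiagRec b a 0 = 1 from rfl]
  have e₃ : eval (x₀ + 1) (tridiagRec b a 3) = 1 - a 1 - a 2 := by
    rw [tridiagRec_add_two_of_eq hb 1]; simp [e₁, e₂]
  have d₃ : eval (x₀ + 1) (derivative (tridiagRec b a 3)) = 1 - a 1 + 2 - a 2 := by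
    rw [derivative_tridiagRec_add_two_of_eq hb 1]; simp [hderiv 0, hP₁, e₂]
  have h := congrArg (eval (x₀ + 1)) (X_sub_C_mul_derivative_tridiagRec_odd hb hderiv 0)
  rw [eval_mul, eval_add, eval_mul, eval_mul, eval_C, eval_C, d₃, e₃, e₁, eval_sub, eval_X,
    eval_C] at h
  linear_combination -h / 2

theorem a_even_eq_and_a_odd_eq (ha : ∀ n ≥ 1, 0 < a n) (hb : ∀ n ≥ 1, b n = x₀)
    (hderiv : ∀ k : ℕ, derivative (tridiagRec b a (2 * k + 2)) =
      C (2 * (k : ℝ) + 2) * tridiagRec b a (2 * k + 1)) :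
    (∀ k : ℕ, a (2 * k + 2) = (k + 1) * a 2) ∧ ∀ k : ℕ, a (2 * k + 1) = a 1 + k * a 2 := by
  have heven (k : ℕ) : a (2 * k + 2) = (k + 1) * a 2 := by
    induction k with
    | zero => simp
    | succ k ih =>
      refine mul_left_cancel₀ (show (k : ℝ) + 1 ≠ 0 by positivity) ?_
      push_cast
      linear_combination (a_relations ha hb hderiv k).2 + ((k : ℝ) + 2) * ih
  refine ⟨heven, fun k => ?_⟩
  induction k with
  | zero => simp
  | succ k ih =>
    rcases k with _ | j
    · simpa [add_comm] using a_three_eq hb hderiv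
    · refine mul_left_cancel₀ (show 2 * (j : ℝ) + 4 ≠ 0 by positivity) ?_
      have hj := heven (j + 1)
      push_cast at ih hj ⊢
      linear_combination (a_relations ha hb hderiv j).1 + (2 * (j : ℝ) + 4) * ih + 2 * hj

end TridiagRec

theorem exists_hermite_params {a : ℕ → ℝ} (ha₁ : 0 < a 1) (ha₂ : 0 < a 2)
    (heven : ∀ k : ℕ, a (2 * k + 2) = (k + 1) * a 2)
    (hodd : ∀ k : ℕ, a (2 * k + 1) = a 1 + k * a 2) :
    ∃ γ : ℝ, -1 < γ ∧ ∃ c : ℝ, 0 < c ∧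
      (∀ n ≥ 1, Even n → a n = n / (2 * c ^ 2)) ∧
      (∀ n ≥ 1, Odd n → a n = (n + γ) / (2 * c ^ 2)) := by
  have hc : 2 * ((√(a 2))⁻¹) ^ 2 = 2 / a 2 := by
    rw [inv_pow, Real.sq_sqrt ha₂.le, div_eq_mul_inv]
  refine ⟨2 * a 1 / a 2 - 1, by have := div_pos (mul_pos two_pos ha₁) ha₂; linarith,
    (√(a 2))⁻¹, by positivity, fun n hn ⟨k, hk⟩ => ?_, fun n _ ⟨k, hk⟩ => ?_⟩
  · obtain ⟨k, rfl⟩ : ∃ j, k = j + 1 := ⟨k - 1, by omega⟩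
    rw [hc, show n = 2 * k + 2 by omega, heven]
    field_simp
    push_cast
    ring
  · rw [hc, hk, hodd]
    field_simp
    push_cast
    ring

theorem generalized_hermite_characterization_general
    (b a : ℕ → ℝ) (ha : ∀ n ≥ 1, 0 < a n) (x₀ : ℝ)
    (P : ℕ → Polynomial ℝ) (hP : P = tridiagRec b a)
    (hodd : ∀ m ≥ 1, ∀ z₀ z₁ : ℝ,
      (P (2 * m)).eval z₀ = 0 → (P (2 * m)).eval z₁ = 0 →
      (P (2 * m - 1)).eval z₀ * (Polynomial.derivative (P (2 * m))).eval z₁ =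
        (P (2 * m - 1)).eval z₁ * (Polynomial.derivative (P (2 * m))).eval z₀)
    (heven_root : ∀ m : ℕ, (P (2 * m + 1)).eval x₀ = 0) :
    ∃ γ : ℝ, -1 < γ ∧ ∃ c : ℝ, 0 < c ∧
      (∀ n ≥ 1, b n = x₀) ∧
      (∀ n ≥ 1, Even n → a n = n / (2 * c ^ 2)) ∧
      (∀ n ≥ 1, Odd n → a n = (n + γ) / (2 * c ^ 2)) := by
  subst hP
  have hderiv (k : ℕ) : derivative (tridiagRec b a (2 * k + 2)) =
      C (2 * (k : ℝ) + 2) * tridiagRec b a (2 * k + 1) := by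
    have h := hodd (k + 1) (by omega)
    rw [show 2 * (k + 1) - 1 = 2 * k + 1 by omega, show 2 * (k + 1) = 2 * k + 1 + 1 by ring] at h
    rw [TridiagRec.derivative_tridiagRec_succ_of_eval_mul_comm ha h]
    push_cast; ring_nf
  have hb : ∀ n ≥ 1, b n = x₀ := by
    intro n hn
    obtain ⟨k, rfl | rfl⟩ := Nat.even_or_odd' n
    · obtain ⟨j, rfl⟩ : ∃ j, k = j + 1 := ⟨k - 1, by omega⟩
      exact TridiagRec.b_even_eq ha heven_root hderiv j
    · exact TridiagRec.b_odd_eq ha heven_root k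
  obtain ⟨heven_a, hodd_a⟩ := TridiagRec.a_even_eq_and_a_odd_eq ha hb hderiv
  obtain ⟨γ, hγ, c, hc, he, ho⟩ :=
    exists_hermite_params (ha 1 le_rfl) (ha 2 (by norm_num)) heven_a hodd_a
  exact ⟨γ, hγ, c, hc, hb, he, ho⟩

/-- **Characterization of the generalized Hermite polynomials (Theorem 2.1).**
If the reversed measures `μ_n^R` (with Stieltjes transform `P n / P (n+1)`, hence masses
`P n z₀ / (P (n+1))' z₀` at the roots `z₀` of `P (n+1)`) have equal masses at all support
points for odd `n = 2m - 1`, and, for even `n = 2m`, have equal masses at all support points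
different from a fixed point `x₀` (which is always a support point and carries positive mass),
then the recurrence coefficients are those of the monic generalized Hermite polynomials,
orthogonal with respect to `|x|^γ exp(-x²) dx`, up to the linear transformation
`x ↦ c (x - x₀)`. -/
theorem generalized_hermite_characterization
    (b a : ℕ → ℝ) (ha : ∀ n ≥ 1, 0 < a n) (x₀ : ℝ)
    (P : ℕ → Polynomial ℝ) (hP : P = tridiagRec b a)
    (hodd : ∀ m ≥ 1, ∀ z₀ z₁ : ℝ,
      (P (2 * m)).eval z₀ = 0 → (P (2 * m)).eval z₁ = 0 →
      (P (2 * m - 1)).eval z₀ * (Polynomial.derivative (P (2 * m))).eval z₁ =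
        (P (2 * m - 1)).eval z₁ * (Polynomial.derivative (P (2 * m))).eval z₀)
    (heven_root : ∀ m : ℕ, (P (2 * m + 1)).eval x₀ = 0)
    (heven : ∀ m : ℕ, ∀ z₀ z₁ : ℝ,
      (P (2 * m + 1)).eval z₀ = 0 → (P (2 * m + 1)).eval z₁ = 0 →
      z₀ ≠ x₀ → z₁ ≠ x₀ →
      (P (2 * m)).eval z₀ * (Polynomial.derivative (P (2 * m + 1))).eval z₁ =
        (P (2 * m)).eval z₁ * (Polynomial.derivative (P (2 * m + 1))).eval z₀)
    (heven_pos : ∀ m : ℕ,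
      0 < (P (2 * m)).eval x₀ * (Polynomial.derivative (P (2 * m + 1))).eval x₀) :
    ∃ γ : ℝ, -1 < γ ∧ ∃ c : ℝ, 0 < c ∧
      (∀ n ≥ 1, b n = x₀) ∧
      (∀ n ≥ 1, Even n → a n = n / (2 * c ^ 2)) ∧
      (∀ n ≥ 1, Odd n → a n = (n + γ) / (2 * c ^ 2)) :=
  generalized_hermite_characterization_general b a ha x₀ P hP hodd heven_root
end

section
/- Let γ > −1 be real and let (a_j)_{j≥1} be a sequence of real numbers satisfying a_{2m−1} = (2/(2m−2))·Σ_{j=1}^{2m−2} a_j for all m ≥ 2 and a_{2m} = (2/(2m−1+γ))·Σ_{j=1}^{2m−1} a_j for all m ≥ 1. Then, with t := 2a₁/(1+γ), one has for all j ≥ 1: a_j = (j/2)·t if j is even and a_j = ((j+γ)/2)·t if j is odd. -/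
/-!
Writing `S_n = a_1 + ⋯ + a_n`, both families of equations say `a_n = 2 S_{n-1} / (n - 1 + γ [n even])`
for `n ≥ 2`, so the whole sequence is determined by `a_1`. The explicit coefficients
`b_j = (j + γ [j odd]) t / 2` satisfy the same recurrence, since `∑_{j ≤ 2k} b_j = k (2k + 1 + γ) t / 2`,
and `b_1 = a_1` for `t = 2 a_1 / (1 + γ)`.
-/

open Finset

theorem eq_of_sum_recurrence {R : Type*} [Semiring R] {a b c : ℕ → R}
    (ha : ∀ n ≥ 2, a n = c n * ∑ j ∈ Icc 1 (n - 1), a j)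
    (hb : ∀ n ≥ 2, b n = c n * ∑ j ∈ Icc 1 (n - 1), b j)
    (h1 : a 1 = b 1) : ∀ n ≥ 1, a n = b n := by
  intro n
  induction n using Nat.strong_induction_on with
  | _ n ih =>
    intro hn
    rcases hn.eq_or_lt with rfl | hn
    · exact h1
    · rw [ha n hn, hb n hn]
      congr 1
      refine sum_congr rfl fun j hj => ?_
      obtain ⟨hj1, hjn⟩ := mem_Icc.1 hj
      exact ih j (by omega) hj1

/-- The system (2.12), with both parities written as one recurrence. -/
def GenHermiteSystem (γ : ℝ) (a : ℕ → ℝ) : Prop :=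
  ∀ n ≥ 2, a n = 2 / ((n : ℝ) - 1 + if Even n then γ else 0) * ∑ j ∈ Icc 1 (n - 1), a j

theorem genHermiteSystem_of_parity {γ : ℝ} {a : ℕ → ℝ}
    (hodd : ∀ m ≥ 2, a (2 * m - 1) =
      (2 / (2 * (m : ℝ) - 2)) * ∑ j ∈ Icc 1 (2 * m - 2), a j)
    (heven : ∀ m ≥ 1, a (2 * m) =
      (2 / (2 * (m : ℝ) - 1 + γ)) * ∑ j ∈ Icc 1 (2 * m - 1), a j) :
    GenHermiteSystem γ a := by
  intro n hn
  rcases Nat.even_or_odd' n with ⟨k, rfl | rfl⟩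
  · have h := heven k (by omega)
    simp only [even_two_mul, if_true]
    push_cast
    convert h using 3
  · have h := hodd (k + 1) (by omega)
    simp only [Nat.not_even_two_mul_add_one, if_false]
    rw [show 2 * (k + 1) - 1 = 2 * k + 1 by omega, show 2 * (k + 1) - 2 = 2 * k by omega] at h
    push_cast at h ⊢
    convert h using 3
    ring

/-- The coefficients (2.13) with scale `t`. -/
noncomputable def genHermiteCoeff (γ t : ℝ) (j : ℕ) : ℝ :=
  ((j : ℝ) + if Even j then 0 else γ) / 2 * t

theorem genHermiteCoeff_two_mul (γ t : ℝ) (k : ℕ) : genHermiteCoeff γ t (2 * k) = k * t := by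
  simp only [genHermiteCoeff, even_two_mul, if_true]
  push_cast
  ring

theorem genHermiteCoeff_two_mul_add_one (γ t : ℝ) (k : ℕ) :
    genHermiteCoeff γ t (2 * k + 1) = (2 * k + 1 + γ) / 2 * t := by
  simp only [genHermiteCoeff, Nat.not_even_two_mul_add_one, if_false]
  push_cast
  ring

theorem sum_genHermiteCoeff_two_mul (γ t : ℝ) (k : ℕ) :
    ∑ j ∈ Icc 1 (2 * k), genHermiteCoeff γ t j = k * (2 * k + 1 + γ) / 2 * t := by
  induction k with
  | zero => simp
  | succ k ih =>
    rw [show 2 * (k + 1) = 2 * k + 1 + 1 by ring, sum_Icc_succ_top (by omega),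
      sum_Icc_succ_top (by omega), ih, genHermiteCoeff_two_mul_add_one,
      show 2 * k + 1 + 1 = 2 * (k + 1) by ring, genHermiteCoeff_two_mul]
    push_cast
    ring

theorem sum_genHermiteCoeff_two_mul_add_one (γ t : ℝ) (k : ℕ) :
    ∑ j ∈ Icc 1 (2 * k + 1), genHermiteCoeff γ t j = (k + 1) * (2 * k + 1 + γ) / 2 * t := by
  rw [sum_Icc_succ_top (by omega), sum_genHermiteCoeff_two_mul, genHermiteCoeff_two_mul_add_one]
  ring

theorem genHermiteSystem_genHermiteCoeff {γ : ℝ} (hγ : -1 < γ) (t : ℝ) :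
    GenHermiteSystem γ (genHermiteCoeff γ t) := by
  intro n hn
  rcases Nat.even_or_odd' n with ⟨k, rfl | rfl⟩
  · obtain ⟨k, rfl⟩ : ∃ l, k = l + 1 := ⟨k - 1, by omega⟩
    have hk : 2 * (k : ℝ) + 1 + γ ≠ 0 := by have := k.cast_nonneg (α := ℝ); linarith
    rw [show 2 * (k + 1) - 1 = 2 * k + 1 by omega, sum_genHermiteCoeff_two_mul_add_one,
      genHermiteCoeff_two_mul]
    simp only [even_two_mul, if_true]
    push_cast
    rw [show 2 * ((k : ℝ) + 1) - 1 + γ = 2 * k + 1 + γ by ring]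
    rw [div_mul_eq_mul_div, eq_div_iff hk]
    ring
  · have hk : (k : ℝ) ≠ 0 := by norm_cast; omega
    rw [Nat.add_sub_cancel, sum_genHermiteCoeff_two_mul, genHermiteCoeff_two_mul_add_one]
    simp only [Nat.not_even_two_mul_add_one, if_false]
    push_cast
    field_simp
    ring

/-- **Solution of the system (2.12).**  If a real sequence `(a_j)_{j ≥ 1}` satisfies
`a_{2m-1} = (2/(2m-2)) · Σ_{j=1}^{2m-2} a_j` for all `m ≥ 2` and
`a_{2m} = (2/(2m-1+γ)) · Σ_{j=1}^{2m-1} a_j` for all `m ≥ 1`, then, with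
`t := 2a₁/(1+γ)`, one has `a_j = (j/2)·t` for even `j ≥ 1` and `a_j = ((j+γ)/2)·t`
for odd `j ≥ 1`.  These are exactly the recurrence coefficients of the generalized
Hermite polynomials (with `t = c⁻²` for a scaling factor `c > 0`). -/
theorem genHermite_recurrence_system (γ : ℝ) (hγ : -1 < γ) (a : ℕ → ℝ)
    (hodd : ∀ m ≥ 2, a (2 * m - 1) =
      (2 / (2 * (m : ℝ) - 2)) * ∑ j ∈ Finset.Icc 1 (2 * m - 2), a j)
    (heven : ∀ m ≥ 1, a (2 * m) =
      (2 / (2 * (m : ℝ) - 1 + γ)) * ∑ j ∈ Finset.Icc 1 (2 * m - 1), a j) :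
    ∀ j ≥ 1,
      (Even j → a j = ((j : ℝ) / 2) * (2 * a 1 / (1 + γ))) ∧
      (Odd j → a j = (((j : ℝ) + γ) / 2) * (2 * a 1 / (1 + γ))) := by
  set t := 2 * a 1 / (1 + γ)
  have ha1 : a 1 = genHermiteCoeff γ t 1 := by
    have : 1 + γ ≠ 0 := by linarith
    simp only [genHermiteCoeff, Nat.not_even_one, if_false, t]
    field_simp
    ring
  have hsol := eq_of_sum_recurrence (genHermiteSystem_of_parity hodd heven)
    (genHermiteSystem_genHermiteCoeff hγ t) ha1
  intro j hj
  rw [hsol j hj, genHermiteCoeff]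
  exact ⟨fun he => by simp [he], fun ho => by simp [Nat.not_even_iff_odd.2 ho]⟩
end

section
/- Let γ > −1 be real and let (a_j)_{j≥1} be a sequence of positive real numbers, with the convention a₀ = 0. Then the following two systems are equivalent: (A) a_{2m} = (2/(2m−1+γ))·Σ_{i=1}^{2m−1} a_i for all m ≥ 1, together with a_{2m}·Σ_{i=1}^{2m−2} a_i = (4/(2m−3+γ))·Σ_{1≤i<j≤2m−2} a_i·a_{j+1} for all m ≥ 2; and (B) a_{2m} = (2/(2m−1+γ))·a_{2m−1} + a_{2m−2} for all m ≥ 1, together with a_{2m} = (4/(2m−1+γ))·a_{2m−1} + a_{2m−4} for all m ≥ 2. Moreover, the unique solution of these systems with a₁ > 0 is a_j = (j/2)·t for even j and a_j = ((j+γ)/2)·t for odd j, where t = 2a₁/(1+γ). -/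
open Finset

namespace GHaux

variable (a : ℕ → ℝ)

/-- Partial sum `S n = a 1 + ⋯ + a n`. -/
noncomputable def S (n : ℕ) : ℝ := ∑ i ∈ Finset.Icc 1 n, a i

/-- `V k = ∑_{i=1}^{2k} a i * S (i+1)`. -/
noncomputable def V (k : ℕ) : ℝ := ∑ i ∈ Finset.Icc 1 (2*k), a i * S a (i+1)

lemma S_succ (n : ℕ) : S a (n+1) = S a n + a (n+1) := by
  unfold S; rw [Finset.sum_Icc_succ_top (by omega)]

lemma S_one : S a 1 = a 1 := by simp [S]

lemma V_zero : V a 0 = 0 := by simp [V]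

lemma V_succ (k : ℕ) :
    V a (k+1) = V a k + a (2*k+1) * S a (2*k+2) + a (2*k+2) * S a (2*k+3) := by
  unfold V
  have h1 : 2*(k+1) = (2*k+1)+1 := by omega
  rw [h1, Finset.sum_Icc_succ_top (by omega), Finset.sum_Icc_succ_top (by omega)]

lemma sum_Ioc_shift (i n : ℕ) : ∑ j ∈ Ioc i n, a (j+1) = ∑ j ∈ Ioc (i+1) (n+1), a j := by
  rw [← Finset.map_add_right_Ioc _ _ 1, Finset.sum_map]; rfl

lemma sum_Ioc_eq (i n : ℕ) (h : i ≤ n) :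
    ∑ j ∈ Ioc i n, a (j+1) = S a (n+1) - S a (i+1) := by
  rw [sum_Ioc_shift]
  have hu : Finset.Icc 1 (i+1) ∪ Finset.Ioc (i+1) (n+1) = Finset.Icc 1 (n+1) := by
    ext x; simp [Finset.mem_Icc, Finset.mem_Ioc]; omega
  have hd : Disjoint (Finset.Icc 1 (i+1)) (Finset.Ioc (i+1) (n+1)) := by
    simp [Finset.disjoint_left]; omega
  have hs : S a (n+1) = S a (i+1) + ∑ j ∈ Finset.Ioc (i+1) (n+1), a j := by
    unfold S; rw [← Finset.sum_union hd, hu]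
  rw [hs]; ring

/-- The double sum in (A2) equals `S(2k+2)·S(2k+3) − V(k+1)`. -/
lemma T_eq (k : ℕ) :
    ∑ i ∈ Finset.Icc 1 (2*k+2), ∑ j ∈ Finset.Ioc i (2*k+2), a i * a (j+1)
      = S a (2*k+2) * S a (2*k+3) - V a (k+1) := by
  have : ∀ i ∈ Finset.Icc 1 (2*k+2),
      ∑ j ∈ Finset.Ioc i (2*k+2), a i * a (j+1) = a i * S a (2*k+3) - a i * S a (i+1) := by
    intro i hi
    simp only [Finset.mem_Icc] at hi
    rw [← Finset.mul_sum, sum_Ioc_eq a i (2*k+2) hi.2]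
    ring
  rw [Finset.sum_congr rfl this, Finset.sum_sub_distrib, ← Finset.sum_mul]
  have h2 : 2*(k+1) = 2*k+2 := by omega
  unfold V S
  rw [h2]

variable (γ : ℝ)

lemma dpos (hγ : -1 < γ) (k : ℕ) : (0:ℝ) < 2*(k:ℝ)+1+γ := by
  have : (0:ℝ) ≤ (k:ℝ) := Nat.cast_nonneg k
  linarith

/-- A1 (multiplied form) implies B1 (multiplied form). -/
lemma A1_imp_B1 (ha0 : a 0 = 0)
    (hA1 : ∀ k : ℕ, 2 * S a (2*k+1) = (2*(k:ℝ)+1+γ) * a (2*k+2)) :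
    ∀ k : ℕ, 2 * a (2*k+1) = (2*(k:ℝ)+1+γ) * (a (2*k+2) - a (2*k)) := by
  intro k
  cases k with
  | zero =>
      have e := hA1 0
      simp only [Nat.mul_zero, Nat.zero_add, S_one, Nat.cast_zero] at e ⊢
      rw [ha0]; linarith
  | succ k =>
      have e1 := hA1 (k+1)
      have e2 := hA1 k
      simp only [show 2*(k+1)+1 = 2*k+3 from by omega,
        show 2*(k+1)+2 = 2*k+4 from by omega, show 2*(k+1) = 2*k+2 from by omega] at e1 ⊢
      have e3 : S a (2*k+3) = S a (2*k+1) + a (2*k+2) + a (2*k+3) := by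
        have h1 := S_succ a (2*k+1)
        have h2 := S_succ a (2*k+2)
        simp only [show 2*k+1+1 = 2*k+2 from by omega, show 2*k+2+1 = 2*k+3 from by omega] at h1 h2
        rw [h2, h1]
      push_cast at e1 ⊢
      linear_combination e1 - e2 - 2*e3

/-- B1 (multiplied form) implies A1 (multiplied form). -/
lemma B1_imp_A1 (ha0 : a 0 = 0)
    (hB1 : ∀ k : ℕ, 2 * a (2*k+1) = (2*(k:ℝ)+1+γ) * (a (2*k+2) - a (2*k))) :
    ∀ k : ℕ, 2 * S a (2*k+1) = (2*(k:ℝ)+1+γ) * a (2*k+2) := by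
  intro k
  induction k with
  | zero =>
      have e := hB1 0
      simp only [Nat.mul_zero, Nat.zero_add, S_one, Nat.cast_zero] at e ⊢
      rw [ha0] at e; linarith
  | succ k ih =>
      have e1 := hB1 (k+1)
      simp only [show 2*(k+1)+1 = 2*k+3 from by omega,
        show 2*(k+1)+2 = 2*k+4 from by omega, show 2*(k+1) = 2*k+2 from by omega] at e1 ⊢
      have e3 : S a (2*k+3) = S a (2*k+1) + a (2*k+2) + a (2*k+3) := by
        have h1 := S_succ a (2*k+1)
        have h2 := S_succ a (2*k+2)
        simp only [show 2*k+1+1 = 2*k+2 from by omega, show 2*k+2+1 = 2*k+3 from by omega] at h1 h2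
        rw [h2, h1]
      push_cast at e1 ⊢
      linear_combination ih + e1 + 2*e3

/-- Given A1, the multiplied form of (A2) at index `k` is equivalent to the closed form
for `V (k+1)`. -/
lemma A2_iff_G
    (hA1 : ∀ k : ℕ, 2 * S a (2*k+1) = (2*(k:ℝ)+1+γ) * a (2*k+2)) (k : ℕ) :
    ((2*(k:ℝ)+1+γ) * (a (2*k+4) * S a (2*k+2))
        = 4 * (S a (2*k+2) * S a (2*k+3) - V a (k+1)))
      ↔ 8 * V a (k+1) = (2*(k:ℝ)+3+γ) * (2*(k:ℝ)+5+γ) * a (2*k+2) * a (2*k+4) := by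
  have e2 := hA1 k
  have e1 := hA1 (k+1)
  simp only [show 2*(k+1)+1 = 2*k+3 from by omega, show 2*(k+1)+2 = 2*k+4 from by omega] at e1
  push_cast at e1
  have hs2 : S a (2*k+2) = S a (2*k+1) + a (2*k+2) := by
    have := S_succ a (2*k+1); simpa [show 2*k+1+1 = 2*k+2 from by omega] using this
  have hP' : S a (2*k+2) = (2*(k:ℝ)+3+γ) * a (2*k+2) / 2 := by rw [hs2]; linarith
  have hQ' : S a (2*k+3) = (2*(k:ℝ)+3+γ) * a (2*k+4) / 2 := by linarith
  rw [hP', hQ']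
  constructor
  · intro h; linear_combination 2*h
  · intro h; linear_combination h/2

/-- Given A1/B1 and the closed form for `V k`, the closed form for `V (k+1)` is equivalent
to the arithmetic-progression condition. -/
lemma G_succ_iff_D (hγ : -1 < γ) (hpos : ∀ j, 1 ≤ j → 0 < a j)
    (hA1 : ∀ k : ℕ, 2 * S a (2*k+1) = (2*(k:ℝ)+1+γ) * a (2*k+2))
    (hB1 : ∀ k : ℕ, 2 * a (2*k+1) = (2*(k:ℝ)+1+γ) * (a (2*k+2) - a (2*k)))
    (k : ℕ)
    (hGk : 8 * V a k = (2*(k:ℝ)+1+γ) * (2*(k:ℝ)+3+γ) * a (2*k) * a (2*k+2)) :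
    (8 * V a (k+1) = (2*(k:ℝ)+3+γ) * (2*(k:ℝ)+5+γ) * a (2*k+2) * a (2*k+4))
      ↔ a (2*k+4) = 2 * a (2*k+2) - a (2*k) := by
  have hα : (0:ℝ) < 2*(k:ℝ)+1+γ := dpos γ hγ k
  have hβ : (0:ℝ) < 2*(k:ℝ)+3+γ := by linarith
  have ha2 : 0 < a (2*k+2) := hpos _ (by omega)
  have e2 := hA1 k
  have e1 := hA1 (k+1)
  simp only [show 2*(k+1)+1 = 2*k+3 from by omega, show 2*(k+1)+2 = 2*k+4 from by omega] at e1
  push_cast at e1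
  have hs2 : S a (2*k+2) = S a (2*k+1) + a (2*k+2) := by
    have := S_succ a (2*k+1); simpa [show 2*k+1+1 = 2*k+2 from by omega] using this
  have hP' : S a (2*k+2) = (2*(k:ℝ)+3+γ) * a (2*k+2) / 2 := by rw [hs2]; linarith
  have hQ' : S a (2*k+3) = (2*(k:ℝ)+3+γ) * a (2*k+4) / 2 := by linarith
  have hB := hB1 k
  rw [V_succ a k, hP', hQ']
  constructor
  · intro h
    have h9 : ((2*(k:ℝ)+3+γ) * a (2*k+2)) *
        ((2*(k:ℝ)+1+γ) * (a (2*k+4) - (2 * a (2*k+2) - a (2*k)))) = 0 := by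
      linear_combination hGk + (2*(2*(k:ℝ)+3+γ)*a (2*k+2))*hB - h
    rcases mul_eq_zero.mp h9 with h' | h'
    · exact absurd h' (by positivity)
    · rcases mul_eq_zero.mp h' with h'' | h''
      · exact absurd h'' (by linarith)
      · linarith
  · intro hD
    linear_combination hGk + (2*(2*(k:ℝ)+3+γ)*a (2*k+2))*hB
      - ((2*(k:ℝ)+1+γ)*(2*(k:ℝ)+3+γ)*a (2*k+2))*hD

/-- Given B1, the multiplied form of (B2) is equivalent to the arithmetic-progression
condition. -/
lemma B2_iff_D (hγ : -1 < γ)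
    (hB1 : ∀ k : ℕ, 2 * a (2*k+1) = (2*(k:ℝ)+1+γ) * (a (2*k+2) - a (2*k)))
    (k : ℕ) :
    ((2*(k:ℝ)+3+γ) * (a (2*k+4) - a (2*k)) = 4 * a (2*k+3))
      ↔ a (2*k+4) = 2 * a (2*k+2) - a (2*k) := by
  have hβ : (0:ℝ) < 2*(k:ℝ)+3+γ := by
    have := dpos γ hγ k; linarith
  have hB := hB1 (k+1)
  simp only [show 2*(k+1)+1 = 2*k+3 from by omega, show 2*(k+1)+2 = 2*k+4 from by omega,
    show 2*(k+1) = 2*k+2 from by omega, show 2*k+2+1 = 2*k+3 from by omega,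
    show 2*k+2+2 = 2*k+4 from by omega] at hB
  push_cast at hB
  constructor
  · intro h
    have h9 : (2*(k:ℝ)+3+γ) * (a (2*k+4) - (2 * a (2*k+2) - a (2*k))) = 0 := by
      linear_combination (-2)*hB - h
    have := mul_eq_zero.mp h9
    rcases this with h' | h'
    · linarith
    · linarith
  · intro hD
    linear_combination (-2)*hB - ((2*(k:ℝ)+3+γ))*hD

end GHaux

namespace GHaux
variable (a : ℕ → ℝ) (γ : ℝ)

/-- Index normalization for the closed form of `V`. -/
lemma G_norm (k : ℕ) :
    (8 * V a (k+1) = (2*((k+1:ℕ):ℝ)+1+γ) * (2*((k+1:ℕ):ℝ)+3+γ) * a (2*(k+1)) * a (2*(k+1)+2))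
      ↔ (8 * V a (k+1) = (2*(k:ℝ)+3+γ) * (2*(k:ℝ)+5+γ) * a (2*k+2) * a (2*k+4)) := by
  simp only [show 2*(k+1) = 2*k+2 from by omega, show 2*k+2+2 = 2*k+4 from by omega]
  push_cast
  constructor <;> intro h <;> linear_combination h

/-- Given A1, the full system (A2) is equivalent to the arithmetic-progression conditions. -/
lemma A2all_iff_Dall (hγ : -1 < γ) (ha0 : a 0 = 0) (hpos : ∀ j, 1 ≤ j → 0 < a j)
    (hA1 : ∀ k : ℕ, 2 * S a (2*k+1) = (2*(k:ℝ)+1+γ) * a (2*k+2)) :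
    (∀ k : ℕ, (2*(k:ℝ)+1+γ) * (a (2*k+4) * S a (2*k+2))
        = 4 * (S a (2*k+2) * S a (2*k+3) - V a (k+1)))
      ↔ (∀ k : ℕ, a (2*k+4) = 2 * a (2*k+2) - a (2*k)) := by
  have hB1 := A1_imp_B1 a γ ha0 hA1
  constructor
  · intro hA2
    have hG : ∀ k : ℕ, 8 * V a k = (2*(k:ℝ)+1+γ) * (2*(k:ℝ)+3+γ) * a (2*k) * a (2*k+2) := by
      intro k
      induction k with
      | zero => simp [V_zero, ha0]
      | succ k _ => exact (G_norm a γ k).mpr ((A2_iff_G a γ hA1 k).mp (hA2 k))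
    intro k
    exact (G_succ_iff_D a γ hγ hpos hA1 hB1 k (hG k)).mp ((G_norm a γ k).mp (hG (k+1)))
  · intro hD
    have hG : ∀ k : ℕ, 8 * V a k = (2*(k:ℝ)+1+γ) * (2*(k:ℝ)+3+γ) * a (2*k) * a (2*k+2) := by
      intro k
      induction k with
      | zero => simp [V_zero, ha0]
      | succ k ih =>
          exact (G_norm a γ k).mpr ((G_succ_iff_D a γ hγ hpos hA1 hB1 k ih).mpr (hD k))
    intro k
    exact (A2_iff_G a γ hA1 k).mpr ((G_norm a γ k).mp (hG (k+1)))

/-- The unique solution. -/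
lemma solution (hγ : -1 < γ) (ha0 : a 0 = 0)
    (hB1 : ∀ k : ℕ, 2 * a (2*k+1) = (2*(k:ℝ)+1+γ) * (a (2*k+2) - a (2*k)))
    (hD : ∀ k : ℕ, a (2*k+4) = 2 * a (2*k+2) - a (2*k)) :
    (∀ k : ℕ, a (2*k) = (k:ℝ) * (2 * a 1 / (1 + γ))) ∧
      (∀ k : ℕ, a (2*k+1) = ((2*(k:ℝ)+1+γ)/2) * (2 * a 1 / (1 + γ))) := by
  set t : ℝ := 2 * a 1 / (1 + γ) with ht
  have h1γ : (0:ℝ) < 1 + γ := by linarith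
  have hB0 := hB1 0
  norm_num at hB0
  rw [ha0] at hB0
  have ha2 : a 2 = t := by
    rw [ht, eq_div_iff h1γ.ne']; linarith
  have heven : ∀ k : ℕ, a (2*k) = (k:ℝ) * t ∧ a (2*k+2) = ((k:ℝ)+1) * t := by
    intro k
    induction k with
    | zero => constructor <;> simp [ha0, ha2]
    | succ k ih =>
        have hd := hD k
        constructor
        · simpa [show 2*(k+1) = 2*k+2 from by omega] using ih.2
        · simp only [show 2*(k+1)+2 = 2*k+4 from by omega]
          push_cast
          rw [hd, ih.1, ih.2]; ring
  constructor
  · exact fun k => (heven k).1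
  · intro k
    have hB := hB1 k
    rw [(heven k).1, (heven k).2] at hB
    have hd : (0:ℝ) < 2*(k:ℝ)+1+γ := dpos γ hγ k
    linarith [hB]

lemma convA1 (hγ : -1 < γ) :
    (∀ m : ℕ, 1 ≤ m → a (2 * m) =
        (2 / (2 * (m : ℝ) - 1 + γ)) * ∑ i ∈ Finset.Icc 1 (2 * m - 1), a i)
      ↔ (∀ k : ℕ, 2 * S a (2*k+1) = (2*(k:ℝ)+1+γ) * a (2*k+2)) := by
  have key : ∀ k : ℕ, (a (2*k+2) =
        (2 / (2 * ((k:ℝ)+1) - 1 + γ)) * ∑ i ∈ Finset.Icc 1 (2*k+1), a i)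
      ↔ (2 * S a (2*k+1) = (2*(k:ℝ)+1+γ) * a (2*k+2)) := by
    intro k
    have hd : (0:ℝ) < 2*(k:ℝ)+1+γ := dpos γ hγ k
    rw [show (2 * ((k:ℝ)+1) - 1 + γ) = 2*(k:ℝ)+1+γ from by ring,
      div_mul_eq_mul_div, eq_div_iff hd.ne']
    unfold S
    constructor <;> intro h <;> linear_combination -h
  constructor
  · intro h k
    have e := h (k+1) (by omega)
    simp only [show 2*(k+1) = 2*k+2 from by omega, show 2*(k+1)-1 = 2*k+1 from by omega] at e
    push_cast at e
    exact (key k).mp e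
  · intro h m hm
    obtain ⟨k, rfl⟩ : ∃ k, m = k+1 := ⟨m-1, by omega⟩
    simp only [show 2*(k+1) = 2*k+2 from by omega, show 2*(k+1)-1 = 2*k+1 from by omega]
    push_cast
    exact (key k).mpr (h k)

lemma convB1 (hγ : -1 < γ) (ha0 : a 0 = 0) :
    (∀ m : ℕ, 1 ≤ m → a (2 * m) =
        (2 / (2 * (m : ℝ) - 1 + γ)) * a (2 * m - 1) + a (2 * m - 2))
      ↔ (∀ k : ℕ, 2 * a (2*k+1) = (2*(k:ℝ)+1+γ) * (a (2*k+2) - a (2*k))) := by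
  have key : ∀ k : ℕ, (a (2*k+2) =
        (2 / (2 * ((k:ℝ)+1) - 1 + γ)) * a (2*k+1) + a (2*k))
      ↔ (2 * a (2*k+1) = (2*(k:ℝ)+1+γ) * (a (2*k+2) - a (2*k))) := by
    intro k
    have hd : (0:ℝ) < 2*(k:ℝ)+1+γ := dpos γ hγ k
    rw [show (2 * ((k:ℝ)+1) - 1 + γ) = 2*(k:ℝ)+1+γ from by ring, div_mul_eq_mul_div]
    constructor
    · intro h
      have h' : a (2*k+2) - a (2*k) = 2 * a (2*k+1) / (2*(k:ℝ)+1+γ) := by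
        rw [h]; ring
      rw [eq_div_iff hd.ne'] at h'
      linear_combination -h'
    · intro h
      have h' : a (2*k+2) - a (2*k) = 2 * a (2*k+1) / (2*(k:ℝ)+1+γ) := by
        rw [eq_div_iff hd.ne']; linear_combination -h
      linear_combination h'
  constructor
  · intro h k
    have e := h (k+1) (by omega)
    simp only [show 2*(k+1) = 2*k+2 from by omega, show 2*(k+1)-1 = 2*k+1 from by omega,
      show 2*(k+1)-2 = 2*k from by omega] at e
    push_cast at e
    exact (key k).mp e
  · intro h m hm
    obtain ⟨k, rfl⟩ : ∃ k, m = k+1 := ⟨m-1, by omega⟩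
    simp only [show 2*(k+1) = 2*k+2 from by omega, show 2*(k+1)-1 = 2*k+1 from by omega,
      show 2*(k+1)-2 = 2*k from by omega]
    push_cast
    exact (key k).mpr (h k)

lemma convB2 (hγ : -1 < γ) :
    (∀ m : ℕ, 2 ≤ m → a (2 * m) =
        (4 / (2 * (m : ℝ) - 1 + γ)) * a (2 * m - 1) + a (2 * m - 4))
      ↔ (∀ k : ℕ, (2*(k:ℝ)+3+γ) * (a (2*k+4) - a (2*k)) = 4 * a (2*k+3)) := by
  have key : ∀ k : ℕ, (a (2*k+4) =
        (4 / (2 * ((k:ℝ)+2) - 1 + γ)) * a (2*k+3) + a (2*k))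
      ↔ ((2*(k:ℝ)+3+γ) * (a (2*k+4) - a (2*k)) = 4 * a (2*k+3)) := by
    intro k
    have hd : (0:ℝ) < 2*(k:ℝ)+3+γ := by have := dpos γ hγ k; linarith
    rw [show (2 * ((k:ℝ)+2) - 1 + γ) = 2*(k:ℝ)+3+γ from by ring, div_mul_eq_mul_div]
    constructor
    · intro h
      have h' : a (2*k+4) - a (2*k) = 4 * a (2*k+3) / (2*(k:ℝ)+3+γ) := by
        rw [h]; ring
      rw [eq_div_iff hd.ne'] at h'
      linear_combination h'
    · intro h
      have h' : a (2*k+4) - a (2*k) = 4 * a (2*k+3) / (2*(k:ℝ)+3+γ) := by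
        rw [eq_div_iff hd.ne']; linear_combination h
      linear_combination h'
  constructor
  · intro h k
    have e := h (k+2) (by omega)
    simp only [show 2*(k+2) = 2*k+4 from by omega, show 2*(k+2)-1 = 2*k+3 from by omega,
      show 2*(k+2)-4 = 2*k from by omega] at e
    push_cast at e
    exact (key k).mp e
  · intro h m hm
    obtain ⟨k, rfl⟩ : ∃ k, m = k+2 := ⟨m-2, by omega⟩
    simp only [show 2*(k+2) = 2*k+4 from by omega, show 2*(k+2)-1 = 2*k+3 from by omega,
      show 2*(k+2)-4 = 2*k from by omega]
    push_cast
    exact (key k).mpr (h k)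

lemma convA2 (hγ : -1 < γ) :
    (∀ m : ℕ, 2 ≤ m → a (2 * m) * ∑ i ∈ Finset.Icc 1 (2 * m - 2), a i =
        (4 / (2 * (m : ℝ) - 3 + γ)) *
          ∑ i ∈ Finset.Icc 1 (2 * m - 2), ∑ j ∈ Finset.Ioc i (2 * m - 2), a i * a (j + 1))
      ↔ (∀ k : ℕ, (2*(k:ℝ)+1+γ) * (a (2*k+4) * S a (2*k+2))
          = 4 * (S a (2*k+2) * S a (2*k+3) - V a (k+1))) := by
  have key : ∀ k : ℕ, (a (2*k+4) * ∑ i ∈ Finset.Icc 1 (2*k+2), a i =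
        (4 / (2 * ((k:ℝ)+2) - 3 + γ)) *
          ∑ i ∈ Finset.Icc 1 (2*k+2), ∑ j ∈ Finset.Ioc i (2*k+2), a i * a (j + 1))
      ↔ ((2*(k:ℝ)+1+γ) * (a (2*k+4) * S a (2*k+2))
          = 4 * (S a (2*k+2) * S a (2*k+3) - V a (k+1))) := by
    intro k
    have hd : (0:ℝ) < 2*(k:ℝ)+1+γ := dpos γ hγ k
    rw [show (2 * ((k:ℝ)+2) - 3 + γ) = 2*(k:ℝ)+1+γ from by ring, T_eq a k,
      div_mul_eq_mul_div, eq_div_iff hd.ne']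
    have hS : ∑ i ∈ Finset.Icc 1 (2*k+2), a i = S a (2*k+2) := rfl
    rw [hS]
    constructor <;> intro h <;> linear_combination h
  constructor
  · intro h k
    have e := h (k+2) (by omega)
    simp only [show 2*(k+2) = 2*k+4 from by omega, show 2*(k+2)-2 = 2*k+2 from by omega] at e
    push_cast at e
    exact (key k).mp e
  · intro h m hm
    obtain ⟨k, rfl⟩ : ∃ k, m = k+2 := ⟨m-2, by omega⟩
    simp only [show 2*(k+2) = 2*k+4 from by omega, show 2*(k+2)-2 = 2*k+2 from by omega]
    push_cast
    exact (key k).mpr (h k)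

end GHaux


/-- **Equivalence of the system (2.14) with a pair of two-term recursions, and its unique
solution (proof of Theorem 2.2).**  Let `γ > -1` and let `(a_j)_{j ≥ 1}` be positive reals
with the convention `a₀ = 0`.  Then system (A), namely
`a_{2m} = (2/(2m-1+γ)) · Σ_{i=1}^{2m-1} a_i` for `m ≥ 1` together with
`a_{2m} · Σ_{i=1}^{2m-2} a_i = (4/(2m-3+γ)) · Σ_{1 ≤ i < j ≤ 2m-2} a_i·a_{j+1}` for `m ≥ 2`,
is equivalent to system (B), namely
`a_{2m} = (2/(2m-1+γ)) · a_{2m-1} + a_{2m-2}` for `m ≥ 1` together with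
`a_{2m} = (4/(2m-1+γ)) · a_{2m-1} + a_{2m-4}` for `m ≥ 2`.  Moreover the unique solution
with `a₁ > 0` is `a_j = (j/2)·t` for even `j` and `a_j = ((j+γ)/2)·t` for odd `j`, where
`t = 2a₁/(1+γ)`. -/
theorem genHermite_system_equivalence (γ : ℝ) (hγ : -1 < γ) (a : ℕ → ℝ)
    (ha0 : a 0 = 0) (hpos : ∀ j ≥ 1, 0 < a j) :
    (((∀ m : ℕ, 1 ≤ m → a (2 * m) =
          (2 / (2 * (m : ℝ) - 1 + γ)) * ∑ i ∈ Finset.Icc 1 (2 * m - 1), a i) ∧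
        (∀ m : ℕ, 2 ≤ m → a (2 * m) * ∑ i ∈ Finset.Icc 1 (2 * m - 2), a i =
          (4 / (2 * (m : ℝ) - 3 + γ)) *
            ∑ i ∈ Finset.Icc 1 (2 * m - 2), ∑ j ∈ Finset.Ioc i (2 * m - 2), a i * a (j + 1)))
      ↔
      ((∀ m : ℕ, 1 ≤ m → a (2 * m) =
          (2 / (2 * (m : ℝ) - 1 + γ)) * a (2 * m - 1) + a (2 * m - 2)) ∧
        (∀ m : ℕ, 2 ≤ m → a (2 * m) =
          (4 / (2 * (m : ℝ) - 1 + γ)) * a (2 * m - 1) + a (2 * m - 4)))) ∧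
    (((∀ m : ℕ, 1 ≤ m → a (2 * m) =
          (2 / (2 * (m : ℝ) - 1 + γ)) * ∑ i ∈ Finset.Icc 1 (2 * m - 1), a i) ∧
        (∀ m : ℕ, 2 ≤ m → a (2 * m) * ∑ i ∈ Finset.Icc 1 (2 * m - 2), a i =
          (4 / (2 * (m : ℝ) - 3 + γ)) *
            ∑ i ∈ Finset.Icc 1 (2 * m - 2), ∑ j ∈ Finset.Ioc i (2 * m - 2), a i * a (j + 1)))
      → ∀ j ≥ 1,
          (Even j → a j = ((j : ℝ) / 2) * (2 * a 1 / (1 + γ))) ∧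
          (Odd j → a j = (((j : ℝ) + γ) / 2) * (2 * a 1 / (1 + γ)))) := by
  have hpos' : ∀ j, 1 ≤ j → 0 < a j := fun j hj => hpos j hj
  constructor
  · constructor
    · rintro ⟨h1, h2⟩
      have hA1 := (GHaux.convA1 a γ hγ).mp h1
      have hB1 := GHaux.A1_imp_B1 a γ ha0 hA1
      have hD := (GHaux.A2all_iff_Dall a γ hγ ha0 hpos' hA1).mp ((GHaux.convA2 a γ hγ).mp h2)
      refine ⟨(GHaux.convB1 a γ hγ ha0).mpr hB1, (GHaux.convB2 a γ hγ).mpr ?_⟩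
      exact fun k => (GHaux.B2_iff_D a γ hγ hB1 k).mpr (hD k)
    · rintro ⟨h1, h2⟩
      have hB1 := (GHaux.convB1 a γ hγ ha0).mp h1
      have hA1 := GHaux.B1_imp_A1 a γ ha0 hB1
      have hD : ∀ k : ℕ, a (2*k+4) = 2 * a (2*k+2) - a (2*k) :=
        fun k => (GHaux.B2_iff_D a γ hγ hB1 k).mp ((GHaux.convB2 a γ hγ).mp h2 k)
      exact ⟨(GHaux.convA1 a γ hγ).mpr hA1,
        (GHaux.convA2 a γ hγ).mpr ((GHaux.A2all_iff_Dall a γ hγ ha0 hpos' hA1).mpr hD)⟩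
  · rintro ⟨h1, h2⟩ j hj
    have hA1 := (GHaux.convA1 a γ hγ).mp h1
    have hB1 := GHaux.A1_imp_B1 a γ ha0 hA1
    have hD := (GHaux.A2all_iff_Dall a γ hγ ha0 hpos' hA1).mp ((GHaux.convA2 a γ hγ).mp h2)
    obtain ⟨he, ho⟩ := GHaux.solution a γ hγ ha0 hB1 hD
    constructor
    · rintro ⟨k, rfl⟩
      rw [show k + k = 2*k from by omega, he k]
      push_cast
      ring
    · rintro ⟨k, rfl⟩
      rw [ho k]
      push_cast
      ring
end
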